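/- Let K be a field of characteristic p > 0, A a right-symmetric algebra over K, and D : A → A a derivation (D(a∘b) = D(a)∘b + a∘D(b)). Define the Steenrod square Sq D : A × A → A by Sq D(a,b) = Σ_{i=1}^{p−1} (i!·(p−i)!)⁻¹ · D^i(a)∘D^{p−i}(b), where the factorials are computed in K (they are nonzero since i, p−i < p). Then Sq D is a right-symmetric 2-cocycle with coefficients in the regular module: d_rsym(Sq D) = 0. -/

import Mathlib

open Finset

section SteenrodAux

variable {K A : Type*} [Field K] [AddCommGroup A] [Module K A]

private theorem sqc_fact_top {p n : ℕ} (hp : p.Prime) [CharP K p] (h : p ≤ n) :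
    ((n.factorial : K)) = 0 := by
  rw [CharP.cast_eq_zero_iff K p]
  exact Nat.dvd_factorial hp.pos h

private theorem sqc_key_coeff {p : ℕ} (hp : p.Prime) [CharP K p] {m n : ℕ} (hmn : m ≤ n)
    (hn : n < p) (x : K) :
    ((n.factorial : K) * x)⁻¹ * (n.choose m : K)
      = ((m.factorial : K) * ((n - m).factorial : K) * x)⁻¹ := by
  have hfac : (n.factorial : K)
      = (n.choose m : K) * ((m.factorial : K) * ((n - m).factorial : K)) := by
    have := Nat.choose_mul_factorial_mul_factorial hmn
    push_cast [← this]
    ring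
  have hC : (n.choose m : K) ≠ 0 := by
    rw [Ne, CharP.cast_eq_zero_iff K p]
    intro hdvd
    have hdvdfac : p ∣ n.factorial := hdvd.trans
      ⟨m.factorial * (n-m).factorial, by rw [← Nat.choose_mul_factorial_mul_factorial hmn]; ring⟩
    rw [Nat.Prime.dvd_factorial hp] at hdvdfac
    omega
  rw [hfac, mul_assoc, mul_inv, mul_comm ((n.choose m : K))⁻¹, mul_assoc,
    inv_mul_cancel₀ hC, mul_one, mul_inv]

private theorem sqc_peel {p : ℕ} (hp : 0 < p) {M : Type*} [AddCommMonoid M] (F : ℕ → M) :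
    ∑ j ∈ range (p+1), F j = F 0 + (∑ j ∈ Ico 1 p, F j + F p) := by
  rw [Finset.sum_range_succ, Finset.sum_range_eq_add_Ico _ hp, add_assoc]

private theorem sqc_tri {M : Type*} [AddCommMonoid M] (H : ℕ → ℕ → M) (n : ℕ) :
    ∑ i ∈ range (n+1), ∑ j ∈ range (i+1), H j (i-j)
      = ∑ j ∈ range (n+1), ∑ m ∈ range (n+1-j), H j m := by
  induction n with
  | zero => simp
  | succ n ih =>
    rw [sum_range_succ, ih,
      Finset.sum_range_succ (fun j => ∑ m ∈ range (n+1+1-j), H j m) (n+1)]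
    have h1 : ∀ j ∈ range (n+1), ∑ m ∈ range (n+1+1-j), H j m
        = ∑ m ∈ range (n+1-j), H j m + H j (n+1-j) := by
      intro j hj
      rw [mem_range] at hj
      rw [show n+1+1-j = (n+1-j)+1 by omega, sum_range_succ]
    rw [Finset.sum_congr rfl h1, Finset.sum_add_distrib,
      Finset.sum_range_succ (fun j => H j (n+1-j)) (n+1)]
    simp only [show n+1-(n+1) = 0 by omega, show n+1+1-(n+1) = 1 by omega,
      Finset.sum_range_one]
    abel

private theorem sqc_leibniz_ad (mul : A →ₗ[K] A →ₗ[K] A) (D : Module.End K A)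
    (hD : ∀ a b : A, D (mul a b) = mul (D a) b + mul a (D b)) (n : ℕ) (x y : A) :
    (D ^ n) (mul x y)
      = ∑ q ∈ Finset.HasAntidiagonal.antidiagonal n, (n.choose q.1) • mul ((D ^ q.1) x) ((D ^ q.2) y) := by
  induction n generalizing x y with
  | zero => simp
  | succ n ih =>
    have h1 : (D ^ (n+1)) (mul x y) = D ((D ^ n) (mul x y)) := by
      rw [pow_succ', Module.End.mul_apply]
    rw [h1, ih, map_sum]
    have h2 : ∀ q ∈ Finset.HasAntidiagonal.antidiagonal n,
        D ((n.choose q.1) • mul ((D ^ q.1) x) ((D ^ q.2) y))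
        = (n.choose q.1) • mul ((D ^ (q.1+1)) x) ((D ^ q.2) y)
          + (n.choose q.1) • mul ((D ^ q.1) x) ((D ^ (q.2+1)) y) := by
      intro q hq
      rw [map_nsmul, hD, smul_add,
        show D ((D ^ q.1) x) = (D ^ (q.1+1)) x from by rw [← Module.End.mul_apply, ← pow_succ'],
        show D ((D ^ q.2) y) = (D ^ (q.2+1)) y from by rw [← Module.End.mul_apply, ← pow_succ']]
    rw [Finset.sum_congr rfl h2, Finset.sum_add_distrib]
    have key : ∑ q ∈ Finset.HasAntidiagonal.antidiagonal n, (n.choose q.1) • mul ((D ^ q.1) x) ((D ^ (q.2+1)) y)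
        = mul x ((D ^ (n+1)) y)
          + ∑ q ∈ Finset.HasAntidiagonal.antidiagonal n,
              (n.choose (q.1+1)) • mul ((D ^ (q.1+1)) x) ((D ^ q.2) y) := by
      have e1 := Finset.Nat.sum_antidiagonal_succ
        (f := fun q : ℕ × ℕ => (n.choose q.1) • mul ((D ^ q.1) x) ((D ^ q.2) y)) (n := n)
      have e2 := Finset.Nat.sum_antidiagonal_succ'
        (f := fun q : ℕ × ℕ => (n.choose q.1) • mul ((D ^ q.1) x) ((D ^ q.2) y)) (n := n)
      rw [e1] at e2
      simp only [Nat.choose_succ_self, zero_smul, zero_add, Nat.choose_zero_right, one_smul,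
        pow_zero, Module.End.one_apply] at e2
      rw [← e2]
    rw [key]
    rw [Finset.Nat.sum_antidiagonal_succ
      (f := fun q : ℕ × ℕ => ((n+1).choose q.1) • mul ((D ^ q.1) x) ((D ^ q.2) y))]
    simp only [Nat.choose_zero_right, one_smul, pow_zero, Module.End.one_apply]
    have h4 : ∀ q ∈ Finset.HasAntidiagonal.antidiagonal n,
        ((n+1).choose (q.1+1)) • mul ((D ^ (q.1+1)) x) ((D ^ q.2) y)
        = (n.choose q.1) • mul ((D ^ (q.1+1)) x) ((D ^ q.2) y)
          + (n.choose (q.1+1)) • mul ((D ^ (q.1+1)) x) ((D ^ q.2) y) := by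
      intro q hq
      rw [Nat.choose_succ_succ, add_nsmul]
    rw [Finset.sum_congr rfl h4, Finset.sum_add_distrib]
    abel

private theorem sqc_leibniz (mul : A →ₗ[K] A →ₗ[K] A) (D : Module.End K A)
    (hD : ∀ a b : A, D (mul a b) = mul (D a) b + mul a (D b)) (n : ℕ) (x y : A) :
    (D ^ n) (mul x y)
      = ∑ j ∈ range (n+1), (n.choose j) • mul ((D ^ j) x) ((D ^ (n - j)) y) := by
  rw [sqc_leibniz_ad mul D hD, Finset.Nat.sum_antidiagonal_eq_sum_range_succ
    (f := fun i j => (n.choose i) • mul ((D ^ i) x) ((D ^ j) y))]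


private theorem sqc_lemA (p : ℕ) (hp : p.Prime) [CharP K p]
    (mul : A →ₗ[K] A →ₗ[K] A) (D : Module.End K A)
    (hD : ∀ a b : A, D (mul a b) = mul (D a) b + mul a (D b)) (a x y : A) :
    mul a (∑ i ∈ Ico 1 p,
        ((i.factorial : K) * ((p - i).factorial : K))⁻¹ • mul ((D ^ i) x) ((D ^ (p - i)) y))
    + ∑ j ∈ Ico 1 p,
        ((j.factorial : K) * ((p - j).factorial : K))⁻¹ • mul ((D ^ j) a) ((D ^ (p - j)) (mul x y))
    = ∑ j ∈ range (p+1), ∑ m ∈ range (p+1-j),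
        ((j.factorial : K) * (m.factorial : K) * ((p-j-m).factorial : K))⁻¹ •
          mul ((D ^ j) a) (mul ((D ^ m) x) ((D ^ (p-j-m)) y)) := by
  have hj0 : (∑ m ∈ range (p+1-0),
      (((0:ℕ).factorial : K) * (m.factorial : K) * ((p-0-m).factorial : K))⁻¹ •
        mul ((D ^ (0:ℕ)) a) (mul ((D ^ m) x) ((D ^ (p-0-m)) y)))
      = mul a (∑ i ∈ Ico 1 p,
          ((i.factorial : K) * ((p - i).factorial : K))⁻¹ • mul ((D ^ i) x) ((D ^ (p - i)) y)) := by
    rw [map_sum]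
    simp only [Nat.sub_zero, Nat.factorial_zero, Nat.cast_one, one_mul, pow_zero,
      Module.End.one_apply, map_smul]
    rw [sqc_peel hp.pos (F := fun m => ((m.factorial : K) * ((p-m).factorial : K))⁻¹ •
      mul a (mul ((D ^ m) x) ((D ^ (p-m)) y)))]
    simp [sqc_fact_top hp le_rfl]
  have hjp : (∑ m ∈ range (p+1-p),
      ((p.factorial : K) * (m.factorial : K) * ((p-p-m).factorial : K))⁻¹ •
        mul ((D ^ p) a) (mul ((D ^ m) x) ((D ^ (p-p-m)) y))) = 0 := by
    simp [sqc_fact_top hp le_rfl]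
  have hbulk : ∀ j ∈ Ico 1 p,
      (∑ m ∈ range (p+1-j),
        ((j.factorial : K) * (m.factorial : K) * ((p-j-m).factorial : K))⁻¹ •
          mul ((D ^ j) a) (mul ((D ^ m) x) ((D ^ (p-j-m)) y)))
      = ((j.factorial : K) * ((p - j).factorial : K))⁻¹ •
          mul ((D ^ j) a) ((D ^ (p - j)) (mul x y)) := by
    intro j hj
    rw [mem_Ico] at hj
    rw [sqc_leibniz mul D hD (p-j) x y, map_sum, Finset.smul_sum,
      show p - j + 1 = p + 1 - j by omega]
    refine Finset.sum_congr rfl fun m hm => ?_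
    rw [mem_range] at hm
    rw [map_nsmul, ← Nat.cast_smul_eq_nsmul K, smul_smul]
    have hc : ((j.factorial : K) * ((p - j).factorial : K))⁻¹ * (((p-j).choose m : K))
        = ((j.factorial : K) * (m.factorial : K) * ((p-j-m).factorial : K))⁻¹ := by
      rw [show ((j.factorial : K) * ((p-j).factorial : K))
          = (((p-j).factorial : K) * (j.factorial : K)) from mul_comm _ _,
        sqc_key_coeff hp (show m ≤ p - j by omega) (show p - j < p by omega) ((j.factorial : K))]
      ring_nf
    rw [hc]
  rw [sqc_peel hp.pos (F := fun j => ∑ m ∈ range (p+1-j),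
    ((j.factorial : K) * (m.factorial : K) * ((p-j-m).factorial : K))⁻¹ •
      mul ((D ^ j) a) (mul ((D ^ m) x) ((D ^ (p-j-m)) y)))]
  rw [hj0, hjp, add_zero, Finset.sum_congr rfl hbulk]


private theorem sqc_lemB (p : ℕ) (hp : p.Prime) [CharP K p]
    (mul : A →ₗ[K] A →ₗ[K] A) (D : Module.End K A)
    (hD : ∀ a b : A, D (mul a b) = mul (D a) b + mul a (D b)) (a x y : A) :
    (∑ i ∈ Ico 1 p,
        ((i.factorial : K) * ((p - i).factorial : K))⁻¹ •
          mul ((D ^ i) (mul a x)) ((D ^ (p - i)) y))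
    + mul (∑ i ∈ Ico 1 p,
        ((i.factorial : K) * ((p - i).factorial : K))⁻¹ • mul ((D ^ i) a) ((D ^ (p - i)) x)) y
    = ∑ j ∈ range (p+1), ∑ m ∈ range (p+1-j),
        ((j.factorial : K) * (m.factorial : K) * ((p-j-m).factorial : K))⁻¹ •
          mul (mul ((D ^ j) a) ((D ^ m) x)) ((D ^ (p-j-m)) y) := by
  rw [← sqc_tri (fun j m => ((j.factorial : K) * (m.factorial : K) *
        ((p-j-m).factorial : K))⁻¹ • mul (mul ((D ^ j) a) ((D ^ m) x)) ((D ^ (p-j-m)) y)) p]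
  -- now RHS is the triangle sum over i, with inner index j, second index i - j
  have hi0 : (∑ j ∈ range (0+1),
      ((j.factorial : K) * (((0:ℕ)-j).factorial : K) * ((p-j-((0:ℕ)-j)).factorial : K))⁻¹ •
        mul (mul ((D ^ j) a) ((D ^ ((0:ℕ)-j)) x)) ((D ^ (p-j-((0:ℕ)-j))) y)) = 0 := by
    simp [sqc_fact_top hp le_rfl]
  have hip : (∑ j ∈ range (p+1),
      ((j.factorial : K) * ((p-j).factorial : K) * ((p-j-(p-j)).factorial : K))⁻¹ •
        mul (mul ((D ^ j) a) ((D ^ (p-j)) x)) ((D ^ (p-j-(p-j))) y))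
      = mul (∑ i ∈ Ico 1 p,
        ((i.factorial : K) * ((p - i).factorial : K))⁻¹ • mul ((D ^ i) a) ((D ^ (p - i)) x)) y := by
    rw [map_sum, LinearMap.sum_apply]
    simp only [Nat.sub_self, pow_zero, Module.End.one_apply, Nat.factorial_zero, Nat.cast_one,
      mul_one, map_smul, LinearMap.smul_apply]
    rw [sqc_peel hp.pos (F := fun j => ((j.factorial : K) * ((p-j).factorial : K))⁻¹ •
      mul (mul ((D ^ j) a) ((D ^ (p-j)) x)) y)]
    simp [sqc_fact_top hp le_rfl]
  have hbulk : ∀ i ∈ Ico 1 p,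
      (∑ j ∈ range (i+1),
        ((j.factorial : K) * ((i-j).factorial : K) * ((p-j-(i-j)).factorial : K))⁻¹ •
          mul (mul ((D ^ j) a) ((D ^ (i-j)) x)) ((D ^ (p-j-(i-j))) y))
      = ((i.factorial : K) * ((p - i).factorial : K))⁻¹ •
          mul ((D ^ i) (mul a x)) ((D ^ (p - i)) y) := by
    intro i hi
    rw [mem_Ico] at hi
    rw [sqc_leibniz mul D hD i a x, map_sum, LinearMap.sum_apply, Finset.smul_sum]
    refine Finset.sum_congr rfl fun j hj => ?_
    rw [mem_range] at hj
    rw [map_nsmul, LinearMap.smul_apply, ← Nat.cast_smul_eq_nsmul K, smul_smul,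
      show p - j - (i-j) = p - i by omega,
      sqc_key_coeff hp (show j ≤ i by omega) (show i < p by omega) (((p-i).factorial : K))]
  rw [sqc_peel hp.pos (F := fun i => ∑ j ∈ range (i+1),
    ((j.factorial : K) * ((i-j).factorial : K) * ((p-j-(i-j)).factorial : K))⁻¹ •
      mul (mul ((D ^ j) a) ((D ^ (i-j)) x)) ((D ^ (p-j-(i-j))) y))]
  rw [hi0, hip, Finset.sum_congr rfl hbulk, zero_add]


private theorem sqc_reflect (p : ℕ) (G : ℕ → ℕ → ℕ → A) :
    ∑ j ∈ range (p+1), ∑ m ∈ range (p+1-j),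
        ((j.factorial : K) * (m.factorial : K) * ((p-j-m).factorial : K))⁻¹ • G j m (p-j-m)
    = ∑ j ∈ range (p+1), ∑ m ∈ range (p+1-j),
        ((j.factorial : K) * (m.factorial : K) * ((p-j-m).factorial : K))⁻¹ • G j (p-j-m) m := by
  refine Finset.sum_congr rfl fun j hj => ?_
  rw [mem_range] at hj
  rw [← Finset.sum_range_reflect (fun m => ((j.factorial : K) * (m.factorial : K) *
      ((p-j-m).factorial : K))⁻¹ • G j (p-j-m) m) (p+1-j)]
  refine Finset.sum_congr rfl fun m hm => ?_
  rw [mem_range] at hm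
  rw [show p+1-j-1-m = p-j-m by omega, show p-j-(p-j-m) = m by omega]
  congr 1
  ring
end SteenrodAux

theorem steenrod_square_cocycle
    {K A : Type*} [Field K] [AddCommGroup A] [Module K A]
    (p : ℕ) (hp : p.Prime) [CharP K p]
    (mul : A →ₗ[K] A →ₗ[K] A)
    (hrs : ∀ a b c : A,
      mul (mul a b) c - mul a (mul b c) = mul (mul a c) b - mul a (mul c b))
    (D : Module.End K A)
    (hD : ∀ a b : A, D (mul a b) = mul (D a) b + mul a (D b)) :
    ∀ a b c : A,
      (let Sq : A → A → A := fun x y =>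
        ∑ i ∈ Finset.Ico 1 p,
          ((i.factorial : K) * ((p - i).factorial : K))⁻¹ •
            mul ((D ^ i) x) ((D ^ (p - i)) y)
       mul a (Sq b c) - mul a (Sq c b) - Sq (mul a b) c + Sq (mul a c) b
         + Sq a (mul b c - mul c b) - mul (Sq a b) c + mul (Sq a c) b = 0) := by
  intro a b c
  set Sq : A → A → A := fun x y =>
      ∑ i ∈ Finset.Ico 1 p,
        ((i.factorial : K) * ((p - i).factorial : K))⁻¹ •
          mul ((D ^ i) x) ((D ^ (p - i)) y) with hSq
  show mul a (Sq b c) - mul a (Sq c b) - Sq (mul a b) c + Sq (mul a c) b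
         + Sq a (mul b c - mul c b) - mul (Sq a b) c + mul (Sq a c) b = 0
  have hsplit : Sq a (mul b c - mul c b) = Sq a (mul b c) - Sq a (mul c b) := by
    rw [hSq]
    rw [← Finset.sum_sub_distrib]
    refine Finset.sum_congr rfl fun i hi => ?_
    rw [map_sub, map_sub, smul_sub]
  have h1 := sqc_lemA p hp mul D hD a b c
  have h2 := sqc_lemA p hp mul D hD a c b
  have h3 := sqc_lemB p hp mul D hD a b c
  have h4 := sqc_lemB p hp mul D hD a c b
  have r2 := sqc_reflect (K := K) p (fun j α β => mul ((D ^ j) a) (mul ((D ^ α) c) ((D ^ β) b)))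
  have r4 := sqc_reflect (K := K) p (fun j α β => mul (mul ((D ^ j) a) ((D ^ α) c)) ((D ^ β) b))
  rw [r2] at h2
  rw [r4] at h4
  have comb : mul a (Sq b c) - mul a (Sq c b) - Sq (mul a b) c + Sq (mul a c) b
      + (Sq a (mul b c) - Sq a (mul c b)) - mul (Sq a b) c + mul (Sq a c) b
      = (mul a (Sq b c) + Sq a (mul b c)) - (mul a (Sq c b) + Sq a (mul c b))
        - (Sq (mul a b) c + mul (Sq a b) c) + (Sq (mul a c) b + mul (Sq a c) b) := by
    abel
  rw [hsplit, comb, hSq]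
  rw [h1, h2, h3, h4]
  rw [← Finset.sum_sub_distrib, ← Finset.sum_sub_distrib, ← Finset.sum_add_distrib]
  refine Finset.sum_eq_zero fun j hj => ?_
  rw [← Finset.sum_sub_distrib, ← Finset.sum_sub_distrib, ← Finset.sum_add_distrib]
  refine Finset.sum_eq_zero fun m hm => ?_
  rw [← smul_sub, ← smul_sub, ← smul_add]
  have h := hrs ((D ^ j) a) ((D ^ m) b) ((D ^ (p-j-m)) c)
  have hb : mul ((D ^ j) a) (mul ((D ^ m) b) ((D ^ (p-j-m)) c))
        - mul ((D ^ j) a) (mul ((D ^ (p-j-m)) c) ((D ^ m) b))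
        - mul (mul ((D ^ j) a) ((D ^ m) b)) ((D ^ (p-j-m)) c)
        + mul (mul ((D ^ j) a) ((D ^ (p-j-m)) c)) ((D ^ m) b)
      = (mul (mul ((D ^ j) a) ((D ^ (p-j-m)) c)) ((D ^ m) b)
          - mul ((D ^ j) a) (mul ((D ^ (p-j-m)) c) ((D ^ m) b)))
        - (mul (mul ((D ^ j) a) ((D ^ m) b)) ((D ^ (p-j-m)) c)
          - mul ((D ^ j) a) (mul ((D ^ m) b) ((D ^ (p-j-m)) c))) := by
    abel
  rw [hb, ← h, sub_self, smul_zero]
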